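/- Let G be a semicomplete digraph having an (l,w)-spider with w > 0. Then G has a tame (l,w′)-spider for some w′ ≥ w. -/

import Mathlib

namespace AlmostSemicomplete

variable {V : Type} [Fintype V] [DecidableEq V]

/-- The closed out-neighborhood `N⁺[U]`. -/
def closedOut (E : V → V → Prop) [DecidableRel E] (U : Finset V) : Finset V :=
  U.biUnion fun u => insert u (Finset.univ.filter fun w => E u w)

/-- The closed in-neighborhood `N⁻[U]`. -/
def closedIn (E : V → V → Prop) [DecidableRel E] (U : Finset V) : Finset V :=
  U.biUnion fun u => insert u (Finset.univ.filter fun w => E w u)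

/-- The open out-neighborhood `N⁺(U)`. -/
def openOut (E : V → V → Prop) [DecidableRel E] (U : Finset V) : Finset V :=
  closedOut E U \ U

/-- The open in-neighborhood `N⁻(U)`. -/
def openIn (E : V → V → Prop) [DecidableRel E] (U : Finset V) : Finset V :=
  closedIn E U \ U

/-- `d⁺(U)`, the number of out-neighbors of the set `U`. -/
def dOut (E : V → V → Prop) [DecidableRel E] (U : Finset V) : ℕ := (openOut E U).card

/-- `d⁻(U)`, the number of in-neighbors of the set `U`. -/
def dIn (E : V → V → Prop) [DecidableRel E] (U : Finset V) : ℕ := (openIn E U).card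

/-- Out-neighbors of a vertex. -/
def NoutV (E : V → V → Prop) [DecidableRel E] (v : V) : Finset V :=
  Finset.univ.filter fun w => E v w

/-- In-neighbors of a vertex. -/
def NinV (E : V → V → Prop) [DecidableRel E] (v : V) : Finset V :=
  Finset.univ.filter fun w => E w v

/-- Out-degree of a vertex. -/
def dOutV (E : V → V → Prop) [DecidableRel E] (v : V) : ℕ := (NoutV E v).card

/-- In-degree of a vertex. -/
def dInV (E : V → V → Prop) [DecidableRel E] (v : V) : ℕ := (NinV E v).card

/-- A separation of a digraph: `A ∪ B = V` and no edge from `A ∖ B` to `B ∖ A`. -/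
def IsSep (E : V → V → Prop) (A B : Finset V) : Prop :=
  A ∪ B = Finset.univ ∧ ∀ a ∈ A, a ∉ B → ∀ b ∈ B, b ∉ A → ¬ E a b

/-- An `S`–`T` separation. -/
def IsSTSep (E : V → V → Prop) (S T A B : Finset V) : Prop :=
  IsSep E A B ∧ S ∩ B = ∅ ∧ T ∩ A = ∅

/-- A minimum `S`–`T` separation, i.e. one of smallest order `|A ∩ B|`. -/
def IsMinSTSep (E : V → V → Prop) (S T X Y : Finset V) : Prop :=
  IsSTSep E S T X Y ∧ ∀ A B : Finset V, IsSTSep E S T A B → (X ∩ Y).card ≤ (A ∩ B).card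

/-- A separation chain: a list of separations with the first components nondecreasing
and the second components nonincreasing. -/
def IsSepChain (E : V → V → Prop) (C : List (Finset V × Finset V)) : Prop :=
  (∀ p ∈ C, IsSep E p.1 p.2) ∧ List.Chain' (fun p q => p.1 ⊆ q.1 ∧ q.2 ⊆ p.2) C

/-- A separation chain is gapless if consecutive separations differ by at most one vertex
on at least one side. -/
def Gapless (C : List (Finset V × Finset V)) : Prop :=
  List.Chain' (fun p q => (q.1 \ p.1).card ≤ 1 ∨ (p.2 \ q.2).card ≤ 1) C

/-- A separation chain is nice if consecutive separations differ by at most one vertex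
on both sides. -/
def Nice (C : List (Finset V × Finset V)) : Prop :=
  List.Chain' (fun p q => (q.1 \ p.1).card ≤ 1 ∧ (p.2 \ q.2).card ≤ 1) C

/-- An `S`–`T` chain: a separation chain whose first separation has second component
`V ∖ S` and whose last separation has first component `V ∖ T`. -/
def IsSTChain (E : V → V → Prop) (S T : Finset V) (C : List (Finset V × Finset V)) : Prop :=
  IsSepChain E C ∧ C.head?.map Prod.snd = some (Finset.univ \ S) ∧
    C.getLast?.map Prod.fst = some (Finset.univ \ T)

/-- An `S`–`T` chain is tight if `A_0 = N⁺[S]` and `B_r = N⁻[T]`. -/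
def Tight (E : V → V → Prop) [DecidableRel E] (S T : Finset V)
    (C : List (Finset V × Finset V)) : Prop :=
  C.head?.map Prod.fst = some (closedOut E S) ∧
    C.getLast?.map Prod.snd = some (closedIn E T)

/-- The order of a separation chain: the maximum order of its member separations. -/
def chainOrder (C : List (Finset V × Finset V)) : ℕ :=
  (C.map fun p => (p.1 ∩ p.2).card).foldr max 0

/-- The chain has order at most `k`. -/
def orderLE (C : List (Finset V × Finset V)) (k : ℕ) : Prop :=
  ∀ p ∈ C, (p.1 ∩ p.2).card ≤ k

/-- A path decomposition of a digraph. -/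
def IsPathDecomp {m : ℕ} (E : V → V → Prop) (X : Fin m → Finset V) : Prop :=
  (∀ v : V, ∃ i, v ∈ X i) ∧
  (∀ u v : V, E u v → ∃ i j : Fin m, j ≤ i ∧ u ∈ X i ∧ v ∈ X j) ∧
  (∀ (v : V) (i j k : Fin m), i ≤ j → j ≤ k → v ∈ X i → v ∈ X k → v ∈ X j)

/-- The width of a path decomposition: maximum bag size minus one. -/
def pdWidth {m : ℕ} (X : Fin m → Finset V) : ℕ :=
  (Finset.univ.sup fun i => (X i).card) - 1

/-- The pathwidth of a digraph. -/
noncomputable def pathwidth (E : V → V → Prop) : ℕ :=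
  sInf {k | ∃ (m : ℕ) (X : Fin m → Finset V), IsPathDecomp E X ∧ pdWidth X = k}

/-- An `h`-semicomplete digraph: every vertex has at most `h` non-neighbors. -/
def HSemicomplete (E : V → V → Prop) [DecidableRel E] (h : ℕ) : Prop :=
  ∀ v : V, (Finset.univ.filter fun u => u ≠ v ∧ ¬ E u v ∧ ¬ E v u).card ≤ h

/-- A semicomplete digraph: between any two distinct vertices there is an edge in
at least one direction. -/
def Semicomplete (E : V → V → Prop) : Prop := ∀ u v : V, u ≠ v → E u v ∨ E v u

/-- A `k`-admissible pair `(S, T)`. -/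
def kAdmissible (E : V → V → Prop) [DecidableRel E] (k : ℕ) (S T : Finset V) : Prop :=
  closedOut E S ∩ T = ∅ ∧ dOut E S ≤ k ∧ dIn E T ≤ k

/-- The potential `μ(S,T) = 2|V ∖ (N⁺[S] ∪ N⁻[T])| + |N⁺(S) Δ N⁻(T)|`. -/
def mu (E : V → V → Prop) [DecidableRel E] (S T : Finset V) : ℕ :=
  2 * (Finset.univ \ (closedOut E S ∪ closedIn E T)).card +
    (symmDiff (openOut E S) (openIn E T)).card

/-- The wildness of a vertex. -/
def wld (E : V → V → Prop) [DecidableRel E] (v : V) : ℕ :=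
  ((Finset.univ.filter fun u => dOutV E u ≤ dOutV E v) \ NoutV E v).card

/-- A `(d, l, k)`-degree tangle. -/
def IsDegTangle (E : V → V → Prop) [DecidableRel E] (d l k : ℕ) (T : Finset V) : Prop :=
  T.card = l ∧ ∀ v ∈ T, d ≤ dOutV E v ∧ dOutV E v ≤ d + k

/-- A `(d, l, k)`-matching tangle. -/
def IsMatchTangle (E : V → V → Prop) [DecidableRel E] (d l k : ℕ)
    (T₁ T₂ : Finset V) : Prop :=
  T₁.card = l ∧ T₂.card = l ∧ (∀ v ∈ T₁, dOutV E v ≤ d) ∧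
    (∀ v ∈ T₂, d + k + 1 ≤ dOutV E v) ∧
    ∃ φ : V → V, Set.BijOn φ ↑T₁ ↑T₂ ∧ ∀ v ∈ T₁, E v (φ v)

/-- A `(d, l, w)`-spider. -/
def IsSpider (E : V → V → Prop) [DecidableRel E] (d l w : ℕ) (T : Finset V)
    (L R : V → Finset V) : Prop :=
  l ≤ T.card ∧ ∀ v ∈ T,
    L v ⊆ NinV E v ∧ 3 * l ≤ (L v).card ∧ (∀ u ∈ L v, dOutV E u ≤ d) ∧
    R v ⊆ NoutV E v ∧ 3 * l ≤ (R v).card ∧ (∀ u ∈ R v, d + w ≤ dOutV E u)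

/-- Tameness of a left-side vertex of a `(d,l,w)`-spider:
`wld(u) ≤ 3l + d + w − d⁺(u) + 2·pw(G)`, stated additively. -/
def LeftTame (E : V → V → Prop) [DecidableRel E] (d l w : ℕ) (u : V) : Prop :=
  wld E u + dOutV E u ≤ 3 * l + d + w + 2 * pathwidth E

/-- Tameness of a right-side vertex of a `(d,l,w)`-spider:
`wld(u) ≤ 3l + d⁺(u) − d + 2·pw(G)`, stated additively. -/
def RightTame (E : V → V → Prop) [DecidableRel E] (d l w : ℕ) (u : V) : Prop :=
  wld E u + d ≤ 3 * l + dOutV E u + 2 * pathwidth E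

/-- A tame `(d, l, w)`-spider: each `L_v` and each `R_v` contains at least `2l`
tame vertices. -/
def IsTameSpider (E : V → V → Prop) [DecidableRel E] (d l w : ℕ) (T : Finset V)
    (L R : V → Finset V) : Prop :=
  IsSpider E d l w T L R ∧ ∀ v ∈ T,
    (∃ L' ⊆ L v, 2 * l ≤ L'.card ∧ ∀ u ∈ L', LeftTame E d l w u) ∧
    (∃ R' ⊆ R v, 2 * l ≤ R'.card ∧ ∀ u ∈ R', RightTame E d l w u)

end AlmostSemicomplete

/-!
Let `p` be the pathwidth, fix a path decomposition of width `p`, and let `F t` be the set of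
vertices all of whose bags precede bag `t`. By semicompleteness, a vertex all of whose bags
come at or after bag `t` dominates `F t`, while a vertex of `F (t + 1)` has all its
out-neighbours in `F t ∪ X t`. Out-degrees are thus sandwiched between the sizes of these
sets, and since `|F t|` grows by at most `p + 1` per step, at most `b + p + 1` vertices have
out-degree `≤ b` and at most `b - a + 3p + 1` have out-degree in `[a, b]`.

Now take an `(l, w)`-spider with `w` maximal (`w ≤ |V|` as `l > 0`). The wild set of `u`
(vertices of out-degree `≤ d⁺(u)` that `u` does not dominate) consists, apart from `u`, of
in-neighbours of `u`, and the degree count forces a vertex of large wildness to have many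
out-neighbours of large out-degree. So `l` untame vertices in some `L_v` would carry an
`(l, w + p + 1)`-spider, and `l` untame vertices in some `R_v` an `(l, w + 1)`-spider. By
maximality fewer than `l` vertices of each `L_v` and `R_v` are untame, leaving `2l` tame ones.
-/

namespace AlmostSemicomplete

open Finset

variable {V : Type}

theorem exists_subset_forall_of_forall_exists {α : Type*} {s : Finset α} (P : α → Prop)
    {k l : ℕ} (hs : k + l ≤ #s) (h : ∀ U ⊆ s, l ≤ #U → ∃ u ∈ U, P u) :
    ∃ t ⊆ s, k ≤ #t ∧ ∀ u ∈ t, P u := by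
  classical
  refine ⟨s.filter P, filter_subset _ _, ?_, fun u hu => (mem_filter.1 hu).2⟩
  have hbad : #(s.filter fun u => ¬ P u) < l := by
    by_contra! hl
    obtain ⟨u, hu, hPu⟩ := h _ (filter_subset _ _) hl
    exact (mem_filter.1 hu).2 hPu
  have := card_filter_add_card_filter_not (s := s) P
  omega

theorem exists_isPathDecomp_pdWidth_eq_pathwidth [Fintype V] (E : V → V → Prop) :
    ∃ (m : ℕ) (X : Fin m → Finset V), IsPathDecomp E X ∧ pdWidth X = pathwidth E := by
  have hunivDecomp : IsPathDecomp E (fun _ : Fin 1 => (univ : Finset V)) :=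
    ⟨fun v => ⟨0, mem_univ v⟩, fun _ _ _ => ⟨0, 0, le_rfl, mem_univ _, mem_univ _⟩,
      fun v _ _ _ _ _ _ _ => mem_univ v⟩
  exact Nat.sInf_mem
    (s := {k | ∃ (m : ℕ) (X : Fin m → Finset V), IsPathDecomp E X ∧ pdWidth X = k})
    ⟨_, 1, _, hunivDecomp, rfl⟩

/-- A path decomposition of width at most `p` with bags indexed by `ℕ`, empty from `length` on;
it spares the `Fin m` arithmetic of `IsPathDecomp`. -/
structure NatPathDecomp (E : V → V → Prop) (p : ℕ) where
  bag : ℕ → Finset V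
  length : ℕ
  lt_length : ∀ {v i}, v ∈ bag i → i < length
  exists_mem : ∀ v, ∃ i, v ∈ bag i
  exists_mem_mem_of_adj : ∀ {u v}, E u v → ∃ i j, j ≤ i ∧ u ∈ bag i ∧ v ∈ bag j
  mem_of_le_of_le : ∀ {v i j k}, i ≤ j → j ≤ k → v ∈ bag i → v ∈ bag k → v ∈ bag j
  card_bag_le : ∀ i, (bag i).card ≤ p + 1

theorem IsPathDecomp.nonempty_natPathDecomp {E : V → V → Prop} {m : ℕ} {X : Fin m → Finset V}
    (hX : IsPathDecomp E X) : Nonempty (NatPathDecomp E (pdWidth X)) := by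
  obtain ⟨hcover, hedge, hinterval⟩ := hX
  let bag : ℕ → Finset V := fun i => if h : i < m then X ⟨i, h⟩ else ∅
  have mem_bag {v : V} {i : ℕ} : v ∈ bag i ↔ ∃ h : i < m, v ∈ X ⟨i, h⟩ := by
    simp only [bag]; split_ifs with h <;> simp [h]
  refine ⟨⟨bag, m, fun hv => (mem_bag.1 hv).1, fun v => ?_, fun huv => ?_,
    fun hij hjk hi hk => ?_, fun i => ?_⟩⟩
  · obtain ⟨i, hi⟩ := hcover v
    exact ⟨i, mem_bag.2 ⟨i.2, hi⟩⟩
  · obtain ⟨i, j, hji, hi, hj⟩ := hedge _ _ huv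
    exact ⟨i, j, hji, mem_bag.2 ⟨i.2, hi⟩, mem_bag.2 ⟨j.2, hj⟩⟩
  · obtain ⟨hi, hvi⟩ := mem_bag.1 hi
    obtain ⟨hk, hvk⟩ := mem_bag.1 hk
    exact mem_bag.2 ⟨by omega, hinterval _ _ _ _ hij hjk hvi hvk⟩
  · simp only [bag]
    split_ifs with h
    · have := le_sup (f := fun i => (X i).card) (mem_univ ⟨i, h⟩)
      unfold pdWidth
      omega
    · simp

theorem nonempty_natPathDecomp_pathwidth [Fintype V] (E : V → V → Prop) :
    Nonempty (NatPathDecomp E (pathwidth E)) := by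
  obtain ⟨m, X, hX, hwidth⟩ := exists_isPathDecomp_pdWidth_eq_pathwidth E
  exact hwidth ▸ hX.nonempty_natPathDecomp

namespace NatPathDecomp

variable {E : V → V → Prop} {p : ℕ} (D : NatPathDecomp E p)

theorem not_adj_of_forall_lt {x y : V} (h : ∀ i j, x ∈ D.bag i → y ∈ D.bag j → i < j) :
    ¬ E x y := fun hxy => by
  obtain ⟨i, j, hji, hi, hj⟩ := D.exists_mem_mem_of_adj hxy
  exact (h i j hi hj).not_ge hji

variable [Fintype V]

open Classical in
noncomputable def forgotten (t : ℕ) : Finset V := univ.filter fun x => ∀ i, x ∈ D.bag i → i < t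

variable {D}

theorem mem_forgotten {x : V} {t : ℕ} : x ∈ D.forgotten t ↔ ∀ i, x ∈ D.bag i → i < t := by
  simp [forgotten]

variable (D)

theorem forgotten_mono : Monotone D.forgotten := fun _ _ hst _ hx =>
  mem_forgotten.2 fun i hi => (mem_forgotten.1 hx i hi).trans_le hst

theorem forgotten_zero : D.forgotten 0 = ∅ :=
  eq_empty_of_forall_notMem fun x hx => by
    obtain ⟨i, hi⟩ := D.exists_mem x
    exact Nat.not_lt_zero _ (mem_forgotten.1 hx i hi)

theorem forgotten_length : D.forgotten D.length = univ :=
  eq_univ_of_forall fun _ => mem_forgotten.2 fun _ => D.lt_length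

theorem exists_card_forgotten_le_lt {c : ℕ} (hc : c < Fintype.card V) :
    ∃ t, #(D.forgotten t) ≤ c ∧ c < #(D.forgotten (t + 1)) := by
  have h : ∃ t, c < #(D.forgotten t) := ⟨D.length, by rwa [forgotten_length, card_univ]⟩
  have hpos : Nat.find h ≠ 0 := fun h0 => by
    simpa [h0, forgotten_zero] using Nat.find_spec h
  refine ⟨Nat.find h - 1, not_lt.1 (Nat.find_min h (by omega)), ?_⟩
  rw [Nat.sub_add_cancel (Nat.pos_of_ne_zero hpos)]
  exact Nat.find_spec h

theorem lt_of_notMem_forgotten_of_notMem_bag {x : V} {t i : ℕ} (hF : x ∉ D.forgotten t)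
    (hB : x ∉ D.bag t) (hi : x ∈ D.bag i) : t < i := by
  obtain ⟨k, hk, htk⟩ : ∃ k, x ∈ D.bag k ∧ t ≤ k := by
    simpa [mem_forgotten] using hF
  have htk' : t < k := htk.lt_of_ne fun h => hB (h ▸ hk)
  by_contra hit
  exact hB (D.mem_of_le_of_le (not_lt.1 hit) htk'.le hi hk)

theorem forgotten_subset_NoutV [DecidableRel E] (hsc : Semicomplete E) {x : V} {t : ℕ}
    (hx : ∀ i, x ∈ D.bag i → t ≤ i) : D.forgotten t ⊆ NoutV E x := by
  intro y hy
  have hlt : ∀ i j, y ∈ D.bag i → x ∈ D.bag j → i < j := fun i j hi hj =>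
    (mem_forgotten.1 hy i hi).trans_le (hx j hj)
  have hyx : y ≠ x := by
    rintro rfl
    obtain ⟨i, hi⟩ := D.exists_mem y
    exact lt_irrefl i (hlt i i hi hi)
  simpa [NoutV] using (hsc x y hyx.symm).resolve_right (D.not_adj_of_forall_lt hlt)

variable [DecidableEq V]

theorem forgotten_succ_subset (t : ℕ) : D.forgotten (t + 1) ⊆ D.forgotten t ∪ D.bag t := by
  intro x hx
  by_contra h
  simp only [mem_union, not_or] at h
  obtain ⟨i, hi⟩ := D.exists_mem x
  have := D.lt_of_notMem_forgotten_of_notMem_bag h.1 h.2 hi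
  have := mem_forgotten.1 hx i hi
  omega

theorem card_forgotten_succ_le (t : ℕ) :
    #(D.forgotten (t + 1)) ≤ #(D.forgotten t) + p + 1 := by
  grw [D.forgotten_succ_subset t, card_union_le, D.card_bag_le t]
  omega

theorem filter_dOutV_lt_subset [DecidableRel E] (hsc : Semicomplete E) (t : ℕ) :
    univ.filter (fun x => dOutV E x < #(D.forgotten (t + 1))) ⊆ D.forgotten t ∪ D.bag t := by
  intro x hx
  by_contra h
  simp only [mem_union, not_or] at h
  have hsub := D.forgotten_subset_NoutV hsc fun i hi =>
    D.lt_of_notMem_forgotten_of_notMem_bag h.1 h.2 hi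
  exact (mem_filter.1 hx).2.not_ge (card_le_card hsub)

theorem NoutV_subset [DecidableRel E] (hirr : Irreflexive E) {x : V} {t : ℕ}
    (hx : x ∈ D.forgotten (t + 1)) : NoutV E x ⊆ D.forgotten t ∪ (D.bag t).erase x := by
  intro y hy
  have hxy : E x y := (mem_filter.1 hy).2
  obtain ⟨i, j, hji, hi, hj⟩ := D.exists_mem_mem_of_adj hxy
  have hit := mem_forgotten.1 hx i hi
  by_contra h
  simp only [mem_union, mem_erase, not_or, not_and] at h
  obtain ⟨k, hk, htk⟩ : ∃ k, y ∈ D.bag k ∧ t ≤ k := by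
    simpa [mem_forgotten] using h.1
  exact h.2 (fun hyx => hirr x (hyx ▸ hxy)) (D.mem_of_le_of_le (by omega) htk hj hk)

theorem dOutV_add_one_le [DecidableRel E] (hirr : Irreflexive E) {x : V} {t : ℕ}
    (hx : x ∈ D.forgotten t) : dOutV E x + 1 ≤ #(D.forgotten t) + p := by
  induction t with
  | zero => simp [forgotten_zero] at hx
  | succ t ih =>
    by_cases hxt : x ∈ D.forgotten t
    · have := card_le_card (D.forgotten_mono (Nat.le_add_right t 1))
      have := ih hxt
      omega
    · have hxb : x ∈ D.bag t := by
        simpa [hxt] using D.forgotten_succ_subset t hx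
      have hlt : #(D.forgotten t) < #(D.forgotten (t + 1)) :=
        card_lt_card ⟨D.forgotten_mono (Nat.le_add_right t 1), fun h => hxt (h hx)⟩
      have := card_le_card (D.NoutV_subset hirr hx)
      have := card_union_le (D.forgotten t) ((D.bag t).erase x)
      have := card_erase_of_mem hxb
      have := D.card_bag_le t
      unfold dOutV
      omega

end NatPathDecomp

variable [Fintype V]

section

variable {E : V → V → Prop} [DecidableRel E]

theorem dOutV_lt_card (hirr : Irreflexive E) (x : V) : dOutV E x < Fintype.card V :=
  card_lt_univ_of_notMem (x := x) fun hx => hirr x (mem_filter.1 hx).2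

theorem IsSpider.le_card {d l w : ℕ} {T : Finset V} {L R : V → Finset V}
    (hs : IsSpider E d l w T L R) (hl : 0 < l) : w ≤ Fintype.card V := by
  obtain ⟨v, hv⟩ := card_pos.1 (hl.trans_le hs.1)
  obtain ⟨-, -, -, -, hRcard, hRdeg⟩ := hs.2 v hv
  obtain ⟨y, hy⟩ := card_pos.1 ((show 0 < 3 * l by omega).trans_le hRcard)
  have := hRdeg y hy
  have := card_le_univ (NoutV E y)
  unfold dOutV at *
  omega

variable [DecidableEq V]

theorem card_filter_dOutV_le (hsc : Semicomplete E) (b : ℕ) :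
    #(univ.filter fun x => dOutV E x ≤ b) ≤ b + pathwidth E + 1 := by
  obtain ⟨D⟩ := nonempty_natPathDecomp_pathwidth E
  rcases lt_or_ge b (Fintype.card V) with hb | hb
  · obtain ⟨t, hFt, hFt'⟩ := D.exists_card_forgotten_le_lt hb
    have hsub : univ.filter (fun x => dOutV E x ≤ b) ⊆ D.forgotten t ∪ D.bag t := fun x hx =>
      D.filter_dOutV_lt_subset hsc t (mem_filter.2 ⟨mem_univ x, by grind⟩)
    calc _ ≤ #(D.forgotten t ∪ D.bag t) := card_le_card hsub
      _ ≤ #(D.forgotten t) + #(D.bag t) := card_union_le _ _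
      _ ≤ b + pathwidth E + 1 := by have := D.card_bag_le t; omega
  · exact (card_le_univ _).trans (by omega)

theorem card_filter_dOutV_mem_Icc_add_le (hirr : Irreflexive E) (hsc : Semicomplete E)
    {a b : ℕ} (hab : a ≤ b) (hb : b < Fintype.card V) :
    #(univ.filter fun x => a ≤ dOutV E x ∧ dOutV E x ≤ b) + a ≤ b + 3 * pathwidth E + 1 := by
  obtain ⟨D⟩ := nonempty_natPathDecomp_pathwidth E
  set p := pathwidth E
  set S := univ.filter fun x => a ≤ dOutV E x ∧ dOutV E x ≤ b
  by_cases ha : a ≤ 2 * p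
  · have := card_le_card (s := S) (monotone_filter_right _ fun _ _ hx => hx.2)
    have := card_filter_dOutV_le hsc b
    omega
  obtain ⟨t₁, hF₁, hF₁'⟩ := D.exists_card_forgotten_le_lt (c := a - p) (by omega)
  obtain ⟨t₂, hF₂, hF₂'⟩ := D.exists_card_forgotten_le_lt hb
  have ht : t₁ ≤ t₂ := by
    by_contra h
    have := card_le_card (D.forgotten_mono (show t₂ + 1 ≤ t₁ by omega))
    omega
  have hsub : S ⊆ (D.forgotten t₂ \ D.forgotten t₁) ∪ D.bag t₂ := by
    intro x hx
    obtain ⟨hax, hxb⟩ := (mem_filter.1 hx).2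
    have hx₂ := D.filter_dOutV_lt_subset hsc t₂ (mem_filter.2 ⟨mem_univ x, by omega⟩)
    have hx₁ : x ∉ D.forgotten t₁ := fun h => by
      have := D.dOutV_add_one_le hirr h
      omega
    simp only [mem_union, mem_sdiff] at hx₂ ⊢
    tauto
  have := D.card_forgotten_succ_le t₁
  have := card_sdiff_of_subset (D.forgotten_mono ht)
  have := D.card_bag_le t₂
  calc #S + a ≤ #(D.forgotten t₂ \ D.forgotten t₁) + #(D.bag t₂) + a := by
        grw [card_le_card hsub, card_union_le]
    _ ≤ b + 3 * p + 1 := by omega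

variable (E) in
def wildSet (u : V) : Finset V :=
  (univ.filter fun x => dOutV E x ≤ dOutV E u) \ NoutV E u

theorem card_wildSet (u : V) : #(wildSet E u) = wld E u := rfl

theorem dOutV_le_of_mem_wildSet {u x : V} (hx : x ∈ wildSet E u) : dOutV E x ≤ dOutV E u :=
  (mem_filter.1 (mem_sdiff.1 hx).1).2

theorem mem_wildSet_self (hirr : Irreflexive E) (u : V) : u ∈ wildSet E u :=
  mem_sdiff.2 ⟨mem_filter.2 ⟨mem_univ u, le_rfl⟩, fun hu => hirr u (mem_filter.1 hu).2⟩

theorem card_erase_wildSet (hirr : Irreflexive E) (u : V) :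
    #((wildSet E u).erase u) + 1 = wld E u :=
  card_erase_add_one (mem_wildSet_self hirr u)

theorem erase_wildSet_subset_NinV (hsc : Semicomplete E) (u : V) :
    (wildSet E u).erase u ⊆ NinV E u := by
  intro x hx
  obtain ⟨hxu, hx⟩ := mem_erase.1 hx
  have hux : ¬ E u x := fun h => (mem_sdiff.1 hx).2 (mem_filter.2 ⟨mem_univ x, h⟩)
  exact mem_filter.2 ⟨mem_univ x, (hsc x u hxu).resolve_right hux⟩

theorem wld_add_dOutV_le (hsc : Semicomplete E) {u : V} {c : ℕ} (hc : dOutV E u ≤ c) :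
    wld E u + dOutV E u ≤
      c + pathwidth E + 1 + #((NoutV E u).filter fun y => c < dOutV E y) := by
  have hdisj : Disjoint (wildSet E u) ((NoutV E u).filter fun y => ¬ c < dOutV E y) :=
    disjoint_left.2 fun x hx hx' => (mem_sdiff.1 hx).2 (mem_of_mem_filter x hx')
  have hsub : wildSet E u ∪ (NoutV E u).filter (fun y => ¬ c < dOutV E y) ⊆
      univ.filter fun x => dOutV E x ≤ c := by
    intro x hx
    refine mem_filter.2 ⟨mem_univ x, ?_⟩
    rcases mem_union.1 hx with hx | hx
    · exact (dOutV_le_of_mem_wildSet hx).trans hc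
    · exact not_lt.1 (mem_filter.1 hx).2
  have := card_le_card hsub
  rw [card_union_of_disjoint hdisj] at this
  have := card_filter_dOutV_le hsc c
  have := card_filter_add_card_filter_not (s := NoutV E u) fun y => c < dOutV E y
  rw [← card_wildSet]
  unfold dOutV at *
  omega

theorem card_filter_wildSet_lt_le (hirr : Irreflexive E) (hsc : Semicomplete E) (u : V)
    (a : ℕ) :
    #((wildSet E u).filter fun x => a < dOutV E x) ≤ dOutV E u + 3 * pathwidth E - a := by
  by_cases ha : a < dOutV E u
  · have hsub : (wildSet E u).filter (fun x => a < dOutV E x) ⊆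
        univ.filter fun x => a + 1 ≤ dOutV E x ∧ dOutV E x ≤ dOutV E u := fun x hx =>
      mem_filter.2 ⟨mem_univ x, (mem_filter.1 hx).2, dOutV_le_of_mem_wildSet (mem_filter.1 hx).1⟩
    have := card_le_card hsub
    have := card_filter_dOutV_mem_Icc_add_le (a := a + 1) hirr hsc ha (dOutV_lt_card hirr u)
    omega
  · have hempty : (wildSet E u).filter (fun x => a < dOutV E x) = ∅ :=
      filter_false_of_mem fun x hx => by have := dOutV_le_of_mem_wildSet hx; omega
    simp [hempty]

theorem isSpider_of_forall_not_leftTame (hirr : Irreflexive E) (hsc : Semicomplete E)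
    {d l w : ℕ} {U : Finset V} (hU : l ≤ #U)
    (h : ∀ u ∈ U, dOutV E u ≤ d ∧ ¬ LeftTame E d l w u) :
    IsSpider E d l (w + pathwidth E + 1) U (fun u => (wildSet E u).erase u)
      (fun u => (NoutV E u).filter fun y => d + w + pathwidth E < dOutV E y) := by
  refine ⟨hU, fun u hu => ?_⟩
  beta_reduce
  obtain ⟨hud, hwild⟩ := h u hu
  unfold LeftTame at hwild
  have hL := card_erase_wildSet hirr u
  have hR := wld_add_dOutV_le hsc (u := u) (c := d + w + pathwidth E) (by omega)
  refine ⟨erase_wildSet_subset_NinV hsc u, by omega,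
    fun x hx => (dOutV_le_of_mem_wildSet (mem_of_mem_erase hx)).trans hud, filter_subset _ _,
    by omega, fun y hy => ?_⟩
  have := (mem_filter.1 hy).2
  omega

theorem isSpider_of_forall_not_rightTame (hirr : Irreflexive E) (hsc : Semicomplete E)
    {d l w : ℕ} (hw : 0 < w) {U : Finset V} (hU : l ≤ #U)
    (h : ∀ u ∈ U, d + w ≤ dOutV E u ∧ ¬ RightTame E d l w u) :
    IsSpider E (d + pathwidth E + 1) l (w + 1) U
      (fun u => ((wildSet E u).erase u).filter fun x => dOutV E x ≤ d + pathwidth E + 1)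
      (fun u => (NoutV E u).filter fun y => dOutV E u + w + pathwidth E < dOutV E y) := by
  refine ⟨hU, fun u hu => ?_⟩
  beta_reduce
  obtain ⟨hud, hwild⟩ := h u hu
  unfold RightTame at hwild
  have hsplit := card_filter_add_card_filter_not (s := (wildSet E u).erase u)
    fun x => dOutV E x ≤ d + pathwidth E + 1
  have hhigh : ((wildSet E u).erase u).filter (fun x => ¬ dOutV E x ≤ d + pathwidth E + 1) ⊆
      (wildSet E u).filter fun x => d + pathwidth E + 1 < dOutV E x := fun x hx => by
    rw [mem_filter] at hx ⊢
    exact ⟨mem_of_mem_erase hx.1, not_le.1 hx.2⟩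
  have := card_le_card hhigh
  have := card_filter_wildSet_lt_le hirr hsc u (d + pathwidth E + 1)
  have := card_erase_wildSet hirr u
  have hR := wld_add_dOutV_le hsc (u := u) (c := dOutV E u + w + pathwidth E) (by omega)
  refine ⟨(filter_subset _ _).trans (erase_wildSet_subset_NinV hsc u), by omega,
    fun x hx => (mem_filter.1 hx).2, filter_subset _ _, by omega, fun y hy => ?_⟩
  have := (mem_filter.1 hy).2
  omega

theorem IsSpider.isTameSpider_of_maximal (hirr : Irreflexive E) (hsc : Semicomplete E)
    {d l w : ℕ} {T : Finset V} {L R : V → Finset V} (hs : IsSpider E d l w T L R) (hw : 0 < w)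
    (hmax : ∀ d' w' T' L' R', IsSpider E d' l w' T' L' R' → w' ≤ w) :
    IsTameSpider E d l w T L R := by
  refine ⟨hs, fun v hv => ?_⟩
  obtain ⟨-, hLcard, hLdeg, -, hRcard, hRdeg⟩ := hs.2 v hv
  constructor
  · refine exists_subset_forall_of_forall_exists _ (l := l) (by omega) fun U hU hlU => ?_
    by_contra! hwild
    have := hmax _ _ _ _ _ (isSpider_of_forall_not_leftTame hirr hsc hlU fun u hu =>
      ⟨hLdeg u (hU hu), hwild u hu⟩)
    omega
  · refine exists_subset_forall_of_forall_exists _ (l := l) (by omega) fun U hU hlU => ?_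
    by_contra! hwild
    have := hmax _ _ _ _ _ (isSpider_of_forall_not_rightTame hirr hsc hw hlU fun u hu =>
      ⟨hRdeg u (hU hu), hwild u hu⟩)
    omega

end

variable [DecidableEq V]

/-- If a semicomplete digraph has an `(l,w)`-spider with `w > 0`, then it has a tame
`(l,w')`-spider for some `w' ≥ w`. -/
theorem exists_tame_spider (E : V → V → Prop) [DecidableRel E]
    (hirr : Irreflexive E) (hsc : Semicomplete E)
    (d l w : ℕ) (hl : 0 < l) (hw : 0 < w)
    (T : Finset V) (L R : V → Finset V) (hs : IsSpider E d l w T L R) :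
    ∃ (d' w' : ℕ) (T' : Finset V) (L' R' : V → Finset V),
      w ≤ w' ∧ IsTameSpider E d' l w' T' L' R' := by
  set widths := {ω | ∃ d T L R, IsSpider E d l ω T L R}
  have hbdd : BddAbove widths := ⟨Fintype.card V, fun _ ⟨_, _, _, _, h⟩ => h.le_card hl⟩
  have hw_mem : w ∈ widths := ⟨d, T, L, R, hs⟩
  obtain ⟨d', T', L', R', hs'⟩ := Nat.sSup_mem ⟨w, hw_mem⟩ hbdd
  have hle : w ≤ sSup widths := le_csSup hbdd hw_mem
  exact ⟨d', _, T', L', R', hle, hs'.isTameSpider_of_maximal hirr hsc (hw.trans_le hle)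
    fun _ _ _ _ _ h => le_csSup hbdd ⟨_, _, _, _, h⟩⟩

end AlmostSemicomplete
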